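/- If f : [a,b] → ℝ (0 < a < b) is symmetrized harmonically convex (i.e., its symmetrical transform f̆ is harmonically convex) and integrable on [a,b], then f(2ab/(a+b)) ≤ (ab/(b-a)) ∫_a^b f(x)/x² dx ≤ (f(a)+f(b))/2. -/

import Mathlib

/-!
Under the substitution `u = 1/x` the measure `dx / x²` becomes `du`, harmonic convexity of `f̆` on
`[a, b]` becomes ordinary convexity of `u ↦ f̆ (1/u)` on `[1/b, 1/a]`, and the harmonic reflection
inside `f̆` becomes the affine reflection `u ↦ 1/a + 1/b - u`. The claim is then the classical
Hermite–Hadamard inequality for the convex function `u ↦ f̆ (1/u)`, whose integral equals that of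
`u ↦ f (1/u)` because the reflection preserves Lebesgue measure.
-/

open intervalIntegral

noncomputable def symTransform (a b : ℝ) (f : ℝ → ℝ) (t : ℝ) : ℝ :=
  (1/2) * (f t + f (a * b * t / ((a + b) * t - a * b)))

open Set MeasureTheory

def HarmonicConvexOn (s : Set ℝ) (φ : ℝ → ℝ) : Prop :=
  ∀ x ∈ s, ∀ y ∈ s, ∀ l ∈ Icc (0 : ℝ) 1,
    φ (x * y / (l * x + (1 - l) * y)) ≤ (1 - l) * φ x + l * φ y

section HermiteHadamard

variable {p q : ℝ} {F : ℝ → ℝ}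

theorem add_sub_mem_Icc {u : ℝ} (hu : u ∈ Icc p q) : p + q - u ∈ Icc p q :=
  ⟨by linarith [hu.2], by linarith [hu.1]⟩

theorem IntervalIntegrable.add_comp_sub_div_two (hF : IntervalIntegrable F volume p q) :
    IntervalIntegrable (fun u => (F u + F (p + q - u)) / 2) volume p q :=
  (hF.add (by simpa using (hF.comp_sub_left (p + q)).symm)).div_const 2

theorem integral_add_comp_sub_div_two (hF : IntervalIntegrable F volume p q) :
    ∫ u in p..q, (F u + F (p + q - u)) / 2 = ∫ u in p..q, F u := by
  have hF' : IntervalIntegrable (fun u => F (p + q - u)) volume p q := by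
    simpa using (hF.comp_sub_left (p + q)).symm
  rw [intervalIntegral.integral_div, intervalIntegral.integral_add hF hF',
    integral_comp_sub_left]
  simp only [add_sub_cancel_right, add_sub_cancel_left]
  ring

theorem ConvexOn.two_mul_le_add_comp_sub (hF : ConvexOn ℝ (Icc p q) F) {u : ℝ}
    (hu : u ∈ Icc p q) : 2 * F ((p + q) / 2) ≤ F u + F (p + q - u) := by
  have h := hF.2 hu (add_sub_mem_Icc hu) (by norm_num : (0 : ℝ) ≤ 1 / 2)
    (by norm_num : (0 : ℝ) ≤ 1 / 2) (by norm_num)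
  rw [show (1 / 2 : ℝ) • u + (1 / 2 : ℝ) • (p + q - u) = (p + q) / 2 by simp; ring] at h
  simp only [smul_eq_mul] at h
  linarith

theorem ConvexOn.add_comp_sub_le (hF : ConvexOn ℝ (Icc p q) F) (hpq : p ≤ q) {u : ℝ}
    (hu : u ∈ Icc p q) : F u + F (p + q - u) ≤ F p + F q := by
  rw [← segment_eq_Icc hpq] at hu
  obtain ⟨α, β, hα, hβ, hαβ, rfl⟩ := hu
  have hp : p ∈ Icc p q := left_mem_Icc.2 hpq
  have hq : q ∈ Icc p q := right_mem_Icc.2 hpq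
  have h₁ := hF.2 hp hq hα hβ hαβ
  have h₂ := hF.2 hp hq hβ hα (by linarith)
  rw [show p + q - (α • p + β • q) = β • p + α • q by
    simp only [smul_eq_mul]; linear_combination -(p + q) * hαβ]
  simp only [smul_eq_mul] at *
  linear_combination h₁ + h₂ + (F p + F q) * hαβ

theorem ConvexOn.hermite_hadamard (hF : ConvexOn ℝ (Icc p q) F)
    (hint : IntervalIntegrable F volume p q) (hpq : p ≤ q) :
    (q - p) * F ((p + q) / 2) ≤ ∫ u in p..q, F u ∧
      ∫ u in p..q, F u ≤ (q - p) * ((F p + F q) / 2) := by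
  rw [← integral_add_comp_sub_div_two hint]
  have hsymm := hint.add_comp_sub_div_two
  constructor
  · calc (q - p) * F ((p + q) / 2) = ∫ _ in p..q, F ((p + q) / 2) := by simp
      _ ≤ _ := integral_mono_on hpq intervalIntegrable_const hsymm
          fun u hu => by linarith [hF.two_mul_le_add_comp_sub hu]
  · calc _ ≤ ∫ _ in p..q, (F p + F q) / 2 :=
          integral_mono_on hpq hsymm intervalIntegrable_const
            fun u hu => by linarith [hF.add_comp_sub_le hpq hu]
      _ = _ := by simp; ring

end HermiteHadamard

section ChangeOfVariables

variable {a b : ℝ}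

theorem inv_mem_Icc_of_mem_Icc_inv (ha : 0 < a) (hb : 0 < b) {u : ℝ} (hu : u ∈ Icc b⁻¹ a⁻¹) :
    u⁻¹ ∈ Icc a b := by
  have hu0 : 0 < u := (inv_pos.2 hb).trans_le hu.1
  exact ⟨(le_inv_comm₀ ha hu0).2 hu.2, (inv_le_comm₀ hu0 hb).2 hu.1⟩

theorem neg_inv_sq_smul_div_sq_inv (g : ℝ → ℝ) {u : ℝ} (hu : u ≠ 0) :
    -(u ^ 2)⁻¹ • (g u⁻¹ / u⁻¹ ^ 2) = -g u⁻¹ := by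
  simp only [smul_eq_mul]
  field_simp

theorem intervalIntegrable_comp_inv_iff (ha : 0 < a) (hab : a ≤ b) {g : ℝ → ℝ} :
    IntervalIntegrable (fun u => g u⁻¹) volume b⁻¹ a⁻¹ ↔
      IntervalIntegrable (fun x => g x / x ^ 2) volume a b := by
  have hb : 0 < b := ha.trans_le hab
  have h := integrableOn_Icc_deriv_smul_iff_of_deriv_nonpos (f := fun u => u⁻¹)
    (f' := fun u => -(u ^ 2)⁻¹) (g := fun x => g x / x ^ 2) (a := b⁻¹) (b := a⁻¹) ?_ ?_ ?_ ?_
  · rw [integrableOn_congr_fun (fun u hu => neg_inv_sq_smul_div_sq_inv g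
      ((inv_pos.2 hb).trans_le hu.1).ne') measurableSet_Icc, inv_inv, inv_inv] at h
    rw [intervalIntegrable_iff_integrableOn_Icc_of_le (inv_anti₀ ha hab),
      intervalIntegrable_iff_integrableOn_Icc_of_le hab, ← h]
    exact integrable_neg_iff.symm
  · exact continuousOn_inv₀.mono fun u hu => ((inv_pos.2 hb).trans_le hu.1).ne'
  · exact fun u hu => hasDerivAt_inv ((inv_pos.2 hb).trans hu.1).ne'
  · exact fun u _ => neg_nonpos.2 (by positivity)
  · exact inv_anti₀ ha hab

theorem integral_comp_inv (ha : 0 < a) (hab : a ≤ b) (g : ℝ → ℝ) :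
    ∫ u in b⁻¹..a⁻¹, g u⁻¹ = ∫ x in a..b, g x / x ^ 2 := by
  have hb : 0 < b := ha.trans_le hab
  have h := integral_Icc_deriv_smul_of_deriv_nonpos (f := fun u => u⁻¹)
    (f' := fun u => -(u ^ 2)⁻¹) (g := fun x => g x / x ^ 2) (a := b⁻¹) (b := a⁻¹) ?_ ?_ ?_ ?_
  · rw [setIntegral_congr_fun measurableSet_Icc (fun u hu => neg_inv_sq_smul_div_sq_inv g
      ((inv_pos.2 hb).trans_le hu.1).ne'), MeasureTheory.integral_neg, neg_inj, inv_inv,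
      inv_inv] at h
    rw [integral_of_le (inv_anti₀ ha hab), integral_of_le hab,
      ← integral_Icc_eq_integral_Ioc, ← integral_Icc_eq_integral_Ioc, h]
  · exact continuousOn_inv₀.mono fun u hu => ((inv_pos.2 hb).trans_le hu.1).ne'
  · exact fun u hu => hasDerivAt_inv ((inv_pos.2 hb).trans hu.1).ne'
  · exact fun u _ => neg_nonpos.2 (by positivity)
  · exact inv_anti₀ ha hab

theorem HarmonicConvexOn.convexOn_comp_inv {φ : ℝ → ℝ} (hφ : HarmonicConvexOn (Icc a b) φ)
    (ha : 0 < a) (hb : 0 < b) : ConvexOn ℝ (Icc b⁻¹ a⁻¹) (fun u => φ u⁻¹) := by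
  refine ⟨convex_Icc _ _, fun u hu v hv α β hα hβ hαβ => ?_⟩
  obtain rfl : α = 1 - β := by linarith
  have hu0 : 0 < u := (inv_pos.2 hb).trans_le hu.1
  have hv0 : 0 < v := (inv_pos.2 hb).trans_le hv.1
  have h := hφ u⁻¹ (inv_mem_Icc_of_mem_Icc_inv ha hb hu) v⁻¹
    (inv_mem_Icc_of_mem_Icc_inv ha hb hv) β ⟨hβ, by linarith⟩
  have hmean : u⁻¹ * v⁻¹ / (β * u⁻¹ + (1 - β) * v⁻¹) = ((1 - β) • u + β • v)⁻¹ := by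
    simp only [smul_eq_mul]
    field_simp
    ring
  rwa [hmean] at h

end ChangeOfVariables

theorem symTransform_inv {a b : ℝ} (ha : a ≠ 0) (hb : b ≠ 0) (f : ℝ → ℝ) {u : ℝ} (hu : u ≠ 0) :
    symTransform a b f u⁻¹ = (f u⁻¹ + f (b⁻¹ + a⁻¹ - u)⁻¹) / 2 := by
  have h : a * b * u⁻¹ / ((a + b) * u⁻¹ - a * b) = (b⁻¹ + a⁻¹ - u)⁻¹ := by
    rw [show b⁻¹ + a⁻¹ - u = ((a + b) * u⁻¹ - a * b) / (a * b * u⁻¹) by field_simp, inv_div]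
  rw [symTransform, h]
  ring

/-- Hermite–Hadamard (İşcan) inequalities for symmetrized harmonically convex
integrable functions. -/
theorem hermite_hadamard_symmetrized_harmonic (a b : ℝ) (f : ℝ → ℝ)
    (ha : 0 < a) (hab : a < b)
    (hshc : ∀ x ∈ Set.Icc a b, ∀ y ∈ Set.Icc a b, ∀ l ∈ Set.Icc (0:ℝ) 1,
      symTransform a b f (x * y / (l * x + (1 - l) * y)) ≤
        (1 - l) * symTransform a b f x + l * symTransform a b f y)
    (hint : IntervalIntegrable f MeasureTheory.volume a b) :
    f (2 * a * b / (a + b)) ≤ a * b / (b - a) * ∫ x in a..b, f x / x ^ 2 ∧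
      a * b / (b - a) * ∫ x in a..b, f x / x ^ 2 ≤ (f a + f b) / 2 := by
  have hb : 0 < b := ha.trans hab
  have hweight : ContinuousOn (fun x : ℝ => (x ^ 2)⁻¹) (uIcc a b) :=
    (continuousOn_id.pow 2).inv₀ fun x hx => by
      rw [uIcc_of_le hab.le] at hx
      exact pow_ne_zero 2 (ha.trans_le hx.1).ne'
  have hg : IntervalIntegrable (fun u => f u⁻¹) volume b⁻¹ a⁻¹ :=
    (intervalIntegrable_comp_inv_iff ha hab.le).2 <| by
      simpa only [div_eq_mul_inv] using hint.mul_continuousOn hweight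
  have hsymm : EqOn (fun u => symTransform a b f u⁻¹)
      (fun u => (f u⁻¹ + f (b⁻¹ + a⁻¹ - u)⁻¹) / 2) (Icc b⁻¹ a⁻¹) := fun u hu =>
    symTransform_inv ha.ne' hb.ne' f ((inv_pos.2 hb).trans_le hu.1).ne'
  have hharm : HarmonicConvexOn (Icc a b) (symTransform a b f) := hshc
  have hconv := (hharm.convexOn_comp_inv ha hb).congr hsymm
  obtain ⟨hlow, hup⟩ := hconv.hermite_hadamard hg.add_comp_sub_div_two (inv_anti₀ ha hab.le)
  rw [integral_add_comp_sub_div_two hg, integral_comp_inv ha hab.le] at hlow hup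
  have hmid : ((b⁻¹ + a⁻¹) / 2)⁻¹ = 2 * a * b / (a + b) := by field_simp
  simp only [sub_half, add_sub_cancel_left, add_sub_cancel_right, inv_inv, hmid] at hlow hup
  have hlen : 0 < a⁻¹ - b⁻¹ := sub_pos.2 (inv_strictAnti₀ ha hab)
  rw [show a * b / (b - a) = (a⁻¹ - b⁻¹)⁻¹ by field_simp, le_inv_mul_iff₀ hlen,
    inv_mul_le_iff₀ hlen]
  constructor <;> linarith
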